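/- Let n be a real number. For every L > 0, every positive integer N with h = L/N, every N-periodic sequence u with u_i > 0 for all i, and every N-periodic sequence v, one has the identity A_Δ^h(u, v) = A_∇^h(u, v). -/

import Mathlib

/-!
Writing the centered difference as a sum of forward ones,
`(u_{i+1} - u_{i-1})/h = d_i + d_{i-1}`, the `i`-th summands of `A_Δ^h` and `A_∇^h` become the
same quadratic form in `(d_{i-1}, d_i)` with coefficients linear in `u_{i-1}^{n-3}, u_i^{n-3},
u_{i+1}^{n-3}`, so the two operators agree summand by summand.
-/

open Finset

/-- Forward difference quotient `d_i = (u_{i+1} - u_i)/h`. -/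
noncomputable def dq (h : ℝ) (u : ℤ → ℝ) (i : ℤ) : ℝ := (u (i + 1) - u i) / h

/-- The discrete operator `A_Δ^h(u,v)`. -/
noncomputable def Adelta (n h : ℝ) (N : ℕ) (u v : ℤ → ℝ) : ℝ :=
  -((n - 2) / 6) * h * (∑ i ∈ Icc (1 : ℤ) (N : ℤ),
      u i ^ (n - 3) * ((dq h u (i - 1)) ^ 2 + (dq h u i) ^ 2) * v i)
  - (n - 2) / 6 * h * (∑ i ∈ Icc (1 : ℤ) (N : ℤ),
      ((u i ^ (n - 3) + u (i + 1) ^ (n - 3)) * dq h u i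
        + (u (i - 1) ^ (n - 3) + u i ^ (n - 3)) * dq h u (i - 1))
      * ((u (i + 1) - u (i - 1)) / (2 * h)) * v i)

/-- The discrete operator `A_∇^h(u,v)`. -/
noncomputable def Anabla (n h : ℝ) (N : ℕ) (u v : ℤ → ℝ) : ℝ :=
  -((n - 2) / 12) * h * (∑ i ∈ Icc (1 : ℤ) (N : ℤ),
      ((u i ^ (n - 3) + u (i + 1) ^ (n - 3)) * (dq h u i) ^ 2
        + (u i ^ (n - 3) + u (i - 1) ^ (n - 3)) * (dq h u (i - 1)) ^ 2) * v i)
  - (n - 2) / 24 * h * (∑ i ∈ Icc (1 : ℤ) (N : ℤ),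
      (u (i + 1) ^ (n - 3) + 2 * u i ^ (n - 3) + u (i - 1) ^ (n - 3))
        * ((u (i + 1) - u (i - 1)) / h) ^ 2 * v i)
  - (n - 2) / 24 * h * (∑ i ∈ Icc (1 : ℤ) (N : ℤ),
      (2 * u i ^ (n - 3) - u (i + 1) ^ (n - 3) - u (i - 1) ^ (n - 3))
        * ((dq h u i) ^ 2 + (dq h u (i - 1)) ^ 2) * v i)

lemma centered_diff_div_eq_dq_add_dq (h : ℝ) (u : ℤ → ℝ) (i : ℤ) :
    (u (i + 1) - u (i - 1)) / h = dq h u i + dq h u (i - 1) := by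
  simp only [dq, sub_add_cancel]
  ring

lemma centered_diff_div_two_mul_eq (h : ℝ) (u : ℤ → ℝ) (i : ℤ) :
    (u (i + 1) - u (i - 1)) / (2 * h) = (dq h u i + dq h u (i - 1)) / 2 := by
  rw [mul_comm, ← div_div, centered_diff_div_eq_dq_add_dq]

theorem adelta_eq_anabla (n h : ℝ) (N : ℕ) (u v : ℤ → ℝ) :
    Adelta n h N u v = Anabla n h N u v := by
  simp only [Adelta, Anabla, centered_diff_div_two_mul_eq]
  simp only [centered_diff_div_eq_dq_add_dq, mul_sum, ← sum_sub_distrib]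
  exact sum_congr rfl fun i _ => by ring

/-- the identity `A_Δ^h(u,v) = A_∇^h(u,v)`. -/
theorem statement3 (n : ℝ) :
    ∀ (L : ℝ) (hL : 0 < L) (N : ℕ) (hN : 0 < N) (h : ℝ) (hh : h = L / N)
      (u : ℤ → ℝ) (hperu : ∀ i : ℤ, u (i + (N : ℤ)) = u i) (hpos : ∀ i : ℤ, 0 < u i)
      (v : ℤ → ℝ) (hperv : ∀ i : ℤ, v (i + (N : ℤ)) = v i),
      Adelta n h N u v = Anabla n h N u v :=
  fun _ _ N _ h _ u _ _ v _ => adelta_eq_anabla n h N u v
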